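/- arXiv:1805.07967 — 7 statements merged into one kernel-verified Lean document; each statement's English description precedes it below -/
import Mathlib

section
/- For Euler's totient function φ, for all k ≥ 1 and n ≥ 1 one has φ(2^k · 3^{n+1}) = 2^k · 3^n, and the map (k, n) ↦ 2^k · 3^n from pairs of positive integers to ℕ is injective. Consequently the sequences S_k = (2^k · 3^n)_{n≥1}, for k = 1, 2, …, are pairwise disjoint infinite φ-anti-orbit sequences, so the infinite anti-orbit number of φ (equivalently, the contravariant set-theoretical entropy of φ) is +∞. -/
lemma tot_aux (k n : ℕ) (hk : 1 ≤ k) :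
    Nat.totient (2 ^ k * 3 ^ (n + 1)) = 2 ^ k * 3 ^ n := by
  rw [Nat.totient_mul ((Nat.Coprime.pow k (n + 1) (show Nat.Coprime 2 3 by decide)))]
  rw [Nat.totient_prime_pow (by norm_num) (by omega),
      Nat.totient_prime_pow (p := 3) (by norm_num) (by omega)]
  obtain ⟨k, rfl⟩ := Nat.exists_eq_add_of_le' hk
  simp only [Nat.add_sub_cancel]
  ring

lemma inj_aux (k n s t : ℕ) (h : 2 ^ k * 3 ^ n = 2 ^ s * 3 ^ t) : k = s ∧ n = t := by
  have h2 : Nat.Prime 2 := by norm_num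
  have h3 : Nat.Prime 3 := by norm_num
  have hne : (2 ^ k * 3 ^ n : ℕ) ≠ 0 := by positivity
  have hf := congrArg Nat.factorization h
  constructor
  · have := congrArg (fun f => f 2) hf
    simpa [Nat.factorization_mul (pow_ne_zero _ two_ne_zero) (pow_ne_zero _ three_ne_zero),
      Nat.Prime.factorization_pow, h2.factorization, h3.factorization,
      Finsupp.single_apply] using this
  · have := congrArg (fun f => f 3) hf
    simpa [Nat.factorization_mul (pow_ne_zero _ two_ne_zero) (pow_ne_zero _ three_ne_zero),
      Nat.Prime.factorization_pow, h2.factorization, h3.factorization,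
      Finsupp.single_apply] using this

/-- For Euler's totient function `φ`: `φ (2^k * 3^(n+1)) = 2^k * 3^n` for all
`k, n ≥ 1`; the map `(k, n) ↦ 2^k * 3^n` is injective on positive pairs; and
consequently there are infinitely many pairwise disjoint infinite `φ`-anti-orbit
sequences (witnessed by a family `F` with `(i, j) ↦ F i j` injective and
`φ (F i (j+1)) = F i j`), so the infinite anti-orbit number (the contravariant
set-theoretical entropy) of `φ` is `+∞`. -/
theorem stmt_3 :
    (∀ k n : ℕ, 1 ≤ k → 1 ≤ n →
        Nat.totient (2 ^ k * 3 ^ (n + 1)) = 2 ^ k * 3 ^ n) ∧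
    (∀ k n s t : ℕ, 1 ≤ k → 1 ≤ n → 1 ≤ s → 1 ≤ t →
        2 ^ k * 3 ^ n = 2 ^ s * 3 ^ t → k = s ∧ n = t) ∧
    (∃ F : ℕ → ℕ → ℕ, (Function.Injective fun p : ℕ × ℕ => F p.1 p.2) ∧
        ∀ i j : ℕ, Nat.totient (F i (j + 1)) = F i j) := by
  refine ⟨fun k n hk _ => tot_aux k n hk, fun k n s t _ _ _ _ h => inj_aux k n s t h, ?_⟩
  refine ⟨fun i j => 2 ^ (i + 1) * 3 ^ (j + 1), ?_, ?_⟩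
  · rintro ⟨a, b⟩ ⟨c, d⟩ h
    obtain ⟨h1, h2⟩ := inj_aux _ _ _ _ h
    simp at h1 h2
    simp [h1, h2]
  · intro i j
    exact tot_aux (i + 1) (j + 1) (by omega)
end

section
/- Let ω(n) denote the number of distinct prime factors of n. There exists a family F : ℕ → ℕ → ℕ such that the map (i, j) ↦ F(i, j) is injective and ω(F(i, j+1)) = F(i, j) for all i, j. Hence there are infinitely many pairwise disjoint infinite ω-anti-orbit sequences, i.e. the infinite anti-orbit number of ω is +∞. -/
/-!
Start the `i`-th sequence at the odd number `2 i + 1`, and obtain each further term from its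
predecessor `m ≥ 1` as `2 ^ (s + 1) * q`, where `q` is the product of the first `m - 1` odd
primes, so that `ω` of the new term is `m`. At position `(i, j + 1)` the exponent is
`s = pair i j`, so every term can be located from its value alone: odd values are the starting
points, and the `2`-adic valuation of an even value encodes its position.
-/

open Finset Nat ArithmeticFunction
open scoped ArithmeticFunction.omega Function

namespace OmegaAntiOrbit

noncomputable def oddPrimeProd (m : ℕ) : ℕ := ∏ k ∈ range m, nth Nat.Prime (k + 1)

lemma two_ne_nth_prime_succ (k : ℕ) : 2 ≠ nth Nat.Prime (k + 1) := by
  rw [← nth_prime_zero_eq_two]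
  exact (nth_strictMono infinite_setOfPred_prime k.succ_pos).ne

lemma coprime_two_oddPrimeProd (m : ℕ) : Coprime 2 (oddPrimeProd m) :=
  Coprime.prod_right fun k _ =>
    (coprime_primes prime_two (prime_nth_prime _)).2 (two_ne_nth_prime_succ k)

lemma oddPrimeProd_pos (m : ℕ) : 0 < oddPrimeProd m :=
  prod_pos fun _ _ => (prime_nth_prime _).pos

lemma cardDistinctFactors_oddPrimeProd (m : ℕ) : ω (oddPrimeProd m) = m := by
  have hcop :
      ((range m : Finset ℕ) : Set ℕ).Pairwise (Coprime on fun k => nth Nat.Prime (k + 1)) :=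
    fun _ _ _ _ hkl => (coprime_primes (prime_nth_prime _) (prime_nth_prime _)).2
      fun h => hkl (by simpa using nth_injective infinite_setOfPred_prime h)
  rw [oddPrimeProd, cardDistinctFactors_prod hcop]
  simp [cardDistinctFactors_apply_prime (prime_nth_prime _)]

lemma cardDistinctFactors_two_pow_mul_oddPrimeProd (s m : ℕ) :
    ω (2 ^ (s + 1) * oddPrimeProd m) = m + 1 := by
  rw [cardDistinctFactors_mul ((coprime_two_oddPrimeProd m).pow_left _),
    cardDistinctFactors_apply_prime_pow prime_two s.succ_ne_zero,
    cardDistinctFactors_oddPrimeProd, add_comm]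

lemma factorization_two_pow_mul_oddPrimeProd (s m : ℕ) :
    (2 ^ s * oddPrimeProd m).factorization 2 = s := by
  have hodd : ¬2 ∣ oddPrimeProd m :=
    (Nat.Prime.coprime_iff_not_dvd prime_two).1 (coprime_two_oddPrimeProd m)
  rw [Nat.factorization_mul (by positivity) (oddPrimeProd_pos m).ne', Finsupp.add_apply,
    factorization_pow_self prime_two, factorization_eq_zero_of_not_dvd hodd, add_zero]

noncomputable def seq (i : ℕ) : ℕ → ℕ
  | 0 => 2 * i + 1
  | j + 1 => 2 ^ (pair i j + 1) * oddPrimeProd (seq i j - 1)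

lemma seq_pos (i j : ℕ) : 0 < seq i j := by
  cases j with
  | zero => exact succ_pos _
  | succ j => exact mul_pos (by positivity) (oddPrimeProd_pos _)

lemma cardDistinctFactors_seq_succ (i j : ℕ) : ω (seq i (j + 1)) = seq i j := by
  rw [seq, cardDistinctFactors_two_pow_mul_oddPrimeProd, Nat.sub_add_cancel (seq_pos i j)]

noncomputable def position (n : ℕ) : ℕ × ℕ :=
  if Even n then (unpair (n.factorization 2 - 1)).map id succ else (n / 2, 0)

lemma position_seq (i j : ℕ) : position (seq i j) = (i, j) := by
  cases j with
  | zero =>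
    rw [seq, position, if_neg (not_even_two_mul_add_one i)]
    congr 1
    omega
  | succ j =>
    have heven : Even (seq i (j + 1)) := by
      rw [seq, pow_succ', mul_assoc]
      exact even_two_mul (2 ^ pair i j * _)
    rw [position, if_pos heven, seq, factorization_two_pow_mul_oddPrimeProd, Nat.add_sub_cancel,
      unpair_pair]
    rfl

end OmegaAntiOrbit

/-- For `ω`, the number of distinct prime factors, there is a family
`F : ℕ → ℕ → ℕ` with `(i, j) ↦ F i j` injective and `ω (F i (j+1)) = F i j`
for all `i, j`: infinitely many pairwise disjoint infinite `ω`-anti-orbit sequences,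
so the infinite anti-orbit number of `ω` is `+∞`. -/
theorem stmt_7 :
    ∃ F : ℕ → ℕ → ℕ, (Function.Injective fun p : ℕ × ℕ => F p.1 p.2) ∧
      ∀ i j : ℕ, ArithmeticFunction.cardDistinctFactors (F i (j + 1)) = F i j :=
  ⟨OmegaAntiOrbit.seq,
    Function.LeftInverse.injective (g := OmegaAntiOrbit.position)
      fun p => OmegaAntiOrbit.position_seq p.1 p.2,
    OmegaAntiOrbit.cardDistinctFactors_seq_succ⟩
end

section
/- Let ψ : ℕ → ℕ be the Dedekind psi function, characterized by ψ(1) = 1 and, for every n ≥ 1, ψ(n) · ∏_{p prime, p ∣ n} p = n · ∏_{p prime, p ∣ n} (p + 1). Then for all k ≥ 1 and n ≥ 1 one has ψ(3^k · 2^n) = 3^k · 2^{n+1}. Consequently the sequences S_k = (3^k · 2^n)_{n≥1} for k = 1, 2, … are pairwise disjoint infinite ψ-orbit sequences, so the infinite orbit number (the set-theoretical entropy) of ψ is +∞. -/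
lemma pf_aux (k n : ℕ) (hk : 1 ≤ k) (hn : 1 ≤ n) :
    (3 ^ k * 2 ^ n).primeFactors = {2, 3} := by
  rw [Nat.primeFactors_mul (by positivity) (by positivity),
    Nat.primeFactors_pow _ (by omega), Nat.primeFactors_pow _ (by omega),
    Nat.Prime.primeFactors (by norm_num), Nat.Prime.primeFactors (by norm_num)]
  decide

lemma inj_aux_s8 (a b a' b' : ℕ) (h : 3 ^ a * 2 ^ b = 3 ^ a' * 2 ^ b') :
    a = a' ∧ b = b' := by
  have h2 : (3 ^ a * 2 ^ b).factorization = (3 ^ a' * 2 ^ b').factorization := by rw [h]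
  have p2 : Nat.Prime 2 := by norm_num
  have p3 : Nat.Prime 3 := by norm_num
  rw [Nat.factorization_mul (by positivity) (by positivity),
    Nat.factorization_mul (by positivity) (by positivity),
    p2.factorization_pow, p2.factorization_pow, p3.factorization_pow,
    p3.factorization_pow] at h2
  constructor
  · have := congrFun (congrArg (fun f => (f : ℕ →₀ ℕ) : (ℕ →₀ ℕ) → ℕ → ℕ) h2) 3
    simpa using this
  · have := congrFun (congrArg (fun f => (f : ℕ →₀ ℕ) : (ℕ →₀ ℕ) → ℕ → ℕ) h2) 2
    simpa using this

/-- Let `ψ : ℕ → ℕ` be the Dedekind psi function, characterized by `ψ 1 = 1` and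
`ψ n * ∏_{p ∈ ℙ, p ∣ n} p = n * ∏_{p ∈ ℙ, p ∣ n} (p + 1)` for all `n ≥ 1`.
Then `ψ (3^k * 2^n) = 3^k * 2^(n+1)` for all `k, n ≥ 1`, and consequently the
sequences `S_k = (3^k * 2^n)_n` are pairwise disjoint infinite `ψ`-orbit sequences
(witnessed by a family `F` with `(i, j) ↦ F i j` injective and
`F i (j+1) = ψ (F i j)`), so the infinite orbit number (the set-theoretical
entropy) of `ψ` is `+∞`. -/
theorem stmt_8 (ψ : ℕ → ℕ) (hψ1 : ψ 1 = 1)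
    (hψ : ∀ n : ℕ, 1 ≤ n →
      ψ n * ∏ p ∈ n.primeFactors, p = n * ∏ p ∈ n.primeFactors, (p + 1)) :
    (∀ k n : ℕ, 1 ≤ k → 1 ≤ n → ψ (3 ^ k * 2 ^ n) = 3 ^ k * 2 ^ (n + 1)) ∧
    (∃ F : ℕ → ℕ → ℕ, (Function.Injective fun p : ℕ × ℕ => F p.1 p.2) ∧
        ∀ i j : ℕ, F i (j + 1) = ψ (F i j)) := by
  have key : ∀ k n : ℕ, 1 ≤ k → 1 ≤ n → ψ (3 ^ k * 2 ^ n) = 3 ^ k * 2 ^ (n + 1) := by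
    intro k n hk hn
    have h := hψ (3 ^ k * 2 ^ n) (Nat.one_le_iff_ne_zero.mpr (by positivity))
    rw [pf_aux k n hk hn] at h
    have h6 : (∏ p ∈ ({2, 3} : Finset ℕ), p) = 6 := by decide
    have h12 : (∏ p ∈ ({2, 3} : Finset ℕ), (p + 1)) = 12 := by decide
    rw [h6, h12] at h
    have : ψ (3 ^ k * 2 ^ n) * 6 = (3 ^ k * 2 ^ (n + 1)) * 6 := by
      rw [h]; ring
    exact Nat.eq_of_mul_eq_mul_right (by norm_num) this
  refine ⟨key, ⟨fun i j => 3 ^ (i + 1) * 2 ^ (j + 1), ?_, ?_⟩⟩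
  · rintro ⟨i, j⟩ ⟨i', j'⟩ h
    simp only at h
    obtain ⟨h1, h2⟩ := inj_aux_s8 _ _ _ _ h
    simp only [Prod.mk.injEq]
    omega
  · intro i j
    rw [key (i + 1) (j + 1) (by omega) (by omega)]
end

section
/- Let ψ : ℕ → ℕ satisfy, for every n ≥ 1, ψ(n) · ∏_{p prime, p ∣ n} p = n · ∏_{p prime, p ∣ n} (p + 1) (the Dedekind psi function). Then ψ(n) ≥ n for all n ≥ 1, and consequently there is no infinite ψ-anti-orbit: no injective sequence (a_n)_{n≥1} of positive integers satisfies a_n = ψ(a_{n+1}) for all n ≥ 1. Hence the infinite anti-orbit number (the contravariant set-theoretical entropy) of ψ is 0. -/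
/-- Let `ψ : ℕ → ℕ` satisfy, for every `n ≥ 1`,
`ψ n * ∏_{p ∈ ℙ, p ∣ n} p = n * ∏_{p ∈ ℙ, p ∣ n} (p + 1)` (the Dedekind psi
function). Then `ψ n ≥ n` for all `n ≥ 1`, and there is no infinite
`ψ`-anti-orbit: no injective sequence of positive integers `a` satisfies
`a n = ψ (a (n+1))` for all `n ≥ 1`. Hence the infinite anti-orbit number (the
contravariant set-theoretical entropy) of `ψ` is `0`. -/
theorem stmt_9 (ψ : ℕ → ℕ)
    (hψ : ∀ n : ℕ, 1 ≤ n →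
      ψ n * ∏ p ∈ n.primeFactors, p = n * ∏ p ∈ n.primeFactors, (p + 1)) :
    (∀ n : ℕ, 1 ≤ n → n ≤ ψ n) ∧
    ¬ ∃ a : ℕ → ℕ, (∀ n, 1 ≤ a n) ∧ Function.Injective a ∧
        ∀ n ≥ 1, a n = ψ (a (n + 1)) := by
  have hge : ∀ n : ℕ, 1 ≤ n → n ≤ ψ n := by
    intro n hn
    have hpos : 0 < ∏ p ∈ n.primeFactors, p := by
      apply Finset.prod_pos
      intro p hp
      exact (Nat.prime_of_mem_primeFactors hp).pos
    have hle : ∏ p ∈ n.primeFactors, p ≤ ∏ p ∈ n.primeFactors, (p + 1) :=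
      Finset.prod_le_prod (fun p _ => Nat.zero_le p) (fun p _ => Nat.le_succ p)
    have : n * ∏ p ∈ n.primeFactors, p ≤ ψ n * ∏ p ∈ n.primeFactors, p := by
      calc n * ∏ p ∈ n.primeFactors, p ≤ n * ∏ p ∈ n.primeFactors, (p + 1) :=
            Nat.mul_le_mul_left n hle
        _ = ψ n * ∏ p ∈ n.primeFactors, p := (hψ n hn).symm
    exact Nat.le_of_mul_le_mul_right this hpos
  refine ⟨hge, ?_⟩
  rintro ⟨a, hpos, hinj, hrec⟩
  have hdec : ∀ n, 1 ≤ n → a (n + 1) < a n := by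
    intro n hn
    have h1 : a (n + 1) ≤ ψ (a (n + 1)) := hge _ (hpos _)
    have h2 : a n = ψ (a (n + 1)) := hrec n hn
    have hne : a (n + 1) ≠ a n := fun h => by
      have := hinj h; omega
    omega
  have key : ∀ k, a (k + 1) + k ≤ a 1 := by
    intro k
    induction k with
    | zero => simp
    | succ m ih =>
      have := hdec (m + 1) (by omega)
      omega
  have h := key (a 1)
  have := hpos (a 1 + 1)
  omega
end

section
/- Let f : ℕ⁺ → ℕ⁺ (positive integers) satisfy f(1) = 1 and f(n) < n for every n > 1. Then: (i) for every k, 1 ∈ V(k, τ̄_f), i.e. f^m(k) = 1 for some m ≥ 0; (ii) V(1, τ_f) = ℕ⁺, i.e. every point is mapped to 1 by some iterate of f; (iii) the space (ℕ⁺, τ̄_f) is connected, where τ̄_f is the topology generated by the sets {f^n(x) : n ≥ 0} for x ∈ ℕ⁺; and (iv) the space (ℕ⁺, τ_f) is connected, where τ_f is the topology generated by the sets {y : ∃ n ≥ 0, f^n(y) = x} for x ∈ ℕ⁺. -/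
/-- Let `f : ℕ+ → ℕ+` satisfy `f 1 = 1` and `f n < n` for every `n > 1`. Then:
(i) for every `k`, `1 ∈ V(k, τ̄_f)`, i.e. some iterate of `f` maps `k` to `1`;
(ii) `V(1, τ_f) = ℕ+`; (iii) the space `(ℕ+, τ̄_f)` is connected, `τ̄_f` being
generated by the sets `{f^[n] x : n ≥ 0}`; and (iv) the space `(ℕ+, τ_f)` is
connected, `τ_f` being generated by the sets `{y : ∃ n, f^[n] y = x}`. -/
theorem stmt_17 (f : ℕ+ → ℕ+) (h1 : f 1 = 1) (hf : ∀ n : ℕ+, 1 < n → f n < n) :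
    (∀ k : ℕ+, ∃ m : ℕ, f^[m] k = 1) ∧
    ({y : ℕ+ | ∃ m : ℕ, f^[m] y = 1} = Set.univ) ∧
    (@ConnectedSpace ℕ+ (TopologicalSpace.generateFrom
      (Set.range fun x : ℕ+ => {y : ℕ+ | ∃ n : ℕ, f^[n] x = y}))) ∧
    (@ConnectedSpace ℕ+ (TopologicalSpace.generateFrom
      (Set.range fun x : ℕ+ => {y : ℕ+ | ∃ n : ℕ, f^[n] y = x}))) := by
  have key : ∀ k : ℕ+, ∃ m : ℕ, f^[m] k = 1 := by
    intro k
    induction k using PNat.strongInductionOn with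
    | _ k ih =>
      rcases eq_or_lt_of_le k.one_le with h | h
      · exact ⟨0, h.symm⟩
      · obtain ⟨m, hm⟩ := ih (f k) (hf k h)
        exact ⟨m + 1, by rwa [Function.iterate_succ_apply]⟩
  have hiter1 : ∀ n : ℕ, f^[n] 1 = 1 := by
    intro n
    induction n with
    | zero => rfl
    | succ n ihn => rw [Function.iterate_succ_apply, h1, ihn]
  refine ⟨key, ?_, ?_, ?_⟩
  · ext y; simp only [Set.mem_setOf_eq, Set.mem_univ, iff_true]; exact key y
  · -- τ̄_f : every nonempty open set contains 1
    set B := Set.range fun x : ℕ+ => {y : ℕ+ | ∃ n : ℕ, f^[n] x = y} with hB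
    have mem1 : ∀ s : Set ℕ+, TopologicalSpace.GenerateOpen B s → s.Nonempty → (1 : ℕ+) ∈ s := by
      intro s hs
      induction hs with
      | basic s hsb =>
        intro _
        obtain ⟨x, rfl⟩ := hsb
        obtain ⟨m, hm⟩ := key x
        exact ⟨m, hm⟩
      | univ => exact fun _ => Set.mem_univ _
      | inter s t _ _ ihs iht =>
        intro ⟨z, hzs, hzt⟩
        exact ⟨ihs ⟨z, hzs⟩, iht ⟨z, hzt⟩⟩
      | sUnion S _ ih =>
        intro ⟨z, u, huS, hzu⟩
        exact ⟨u, huS, ih u huS ⟨z, hzu⟩⟩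
    letI : TopologicalSpace ℕ+ := TopologicalSpace.generateFrom B
    haveI : PreconnectedSpace ℕ+ := by
      refine ⟨fun u v hu hv _ hus hvs => ?_⟩
      refine ⟨1, Set.mem_univ _, mem1 u hu ?_, mem1 v hv ?_⟩
      · exact hus.imp fun z hz => hz.2
      · exact hvs.imp fun z hz => hz.2
    exact ⟨⟨1⟩⟩
  · -- τ_f : every open set containing 1 is univ
    set B := Set.range fun x : ℕ+ => {y : ℕ+ | ∃ n : ℕ, f^[n] y = x} with hB
    have mem1 : ∀ s : Set ℕ+, TopologicalSpace.GenerateOpen B s → (1 : ℕ+) ∈ s →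
        s = Set.univ := by
      intro s hs
      induction hs with
      | basic s hsb =>
        intro h1s
        obtain ⟨x, rfl⟩ := hsb
        obtain ⟨n, hn⟩ := h1s
        rw [hiter1] at hn
        ext y
        simp only [Set.mem_setOf_eq, Set.mem_univ, iff_true]
        obtain ⟨m, hm⟩ := key y
        exact ⟨m, hm.trans hn⟩
      | univ => exact fun _ => rfl
      | inter s t _ _ ihs iht =>
        intro ⟨h1s, h1t⟩
        rw [ihs h1s, iht h1t, Set.univ_inter]
      | sUnion S _ ih =>
        intro ⟨u, huS, h1u⟩
        exact Set.eq_univ_of_univ_subset ((ih u huS h1u) ▸ Set.subset_sUnion_of_mem huS)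
    letI : TopologicalSpace ℕ+ := TopologicalSpace.generateFrom B
    haveI : PreconnectedSpace ℕ+ := by
      refine ⟨fun u v hu hv hcov hus hvs => ?_⟩
      rcases hcov (Set.mem_univ (1 : ℕ+)) with h | h
      · have huu : u = Set.univ := mem1 u hu h
        obtain ⟨z, _, hzv⟩ := hvs
        exact ⟨z, Set.mem_univ _, huu ▸ Set.mem_univ z, hzv⟩
      · have hvu : v = Set.univ := mem1 v hv h
        obtain ⟨z, _, hzu⟩ := hus
        exact ⟨z, Set.mem_univ _, hzu, hvu ▸ Set.mem_univ z⟩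
    exact ⟨⟨1⟩⟩
end

section
/- Let f : ℕ⁺ → ℕ⁺ (positive integers) satisfy f(1) = 1 and f(n) ≥ n for every n > 1. Then both (ℕ⁺, τ̄_f) and (ℕ⁺, τ_f) are disconnected: the pair {1}, ℕ⁺ ∖ {1} is a separation by nonempty open sets in each of these topologies. -/
private lemma iter_one (f : ℕ+ → ℕ+) (h1 : f 1 = 1) : ∀ n : ℕ, f^[n] 1 = 1 := by
  intro n
  induction n with
  | zero => rfl
  | succ k ih => rw [Function.iterate_succ_apply', ih, h1]

private lemma iter_ge (f : ℕ+ → ℕ+) (hf : ∀ n : ℕ+, 1 < n → n ≤ f n) :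
    ∀ (x : ℕ+), 1 < x → ∀ n : ℕ, x ≤ f^[n] x := by
  intro x hx n
  induction n with
  | zero => exact le_refl x
  | succ k ih =>
    rw [Function.iterate_succ_apply']
    exact le_trans ih (hf _ (lt_of_lt_of_le hx ih))

private lemma disconn [t : TopologicalSpace ℕ+]
    (ho : IsOpen ({1} : Set ℕ+)) (hc : IsOpen ({1}ᶜ : Set ℕ+)) :
    ¬ ConnectedSpace ℕ+ := by
  intro hcon
  have hclopen : IsClopen ({1} : Set ℕ+) := ⟨⟨by simpa using hc⟩, ho⟩
  rcases isClopen_iff.mp hclopen with h | h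
  · exact absurd h (by simp [Set.eq_empty_iff_forall_notMem])
  · have : (2 : ℕ+) ∈ ({1} : Set ℕ+) := h ▸ Set.mem_univ 2
    simp at this

/-- Let `f : ℕ+ → ℕ+` satisfy `f 1 = 1` and `f n ≥ n` for every `n > 1`. Then
both `(ℕ+, τ̄_f)` and `(ℕ+, τ_f)` are disconnected: the sets `{1}` and
`ℕ+ \ {1}` form a separation by nonempty open sets in each topology, where
`τ̄_f` is generated by the sets `{f^[n] x : n ≥ 0}` and `τ_f` by the sets
`{y : ∃ n, f^[n] y = x}`. -/
theorem stmt_18 (f : ℕ+ → ℕ+) (h1 : f 1 = 1) (hf : ∀ n : ℕ+, 1 < n → n ≤ f n) :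
    (@IsOpen ℕ+ (TopologicalSpace.generateFrom
        (Set.range fun x : ℕ+ => {y : ℕ+ | ∃ n : ℕ, f^[n] x = y})) {1} ∧
      @IsOpen ℕ+ (TopologicalSpace.generateFrom
        (Set.range fun x : ℕ+ => {y : ℕ+ | ∃ n : ℕ, f^[n] x = y})) {1}ᶜ ∧
      ¬ @ConnectedSpace ℕ+ (TopologicalSpace.generateFrom
        (Set.range fun x : ℕ+ => {y : ℕ+ | ∃ n : ℕ, f^[n] x = y}))) ∧
    (@IsOpen ℕ+ (TopologicalSpace.generateFrom
        (Set.range fun x : ℕ+ => {y : ℕ+ | ∃ n : ℕ, f^[n] y = x})) {1} ∧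
      @IsOpen ℕ+ (TopologicalSpace.generateFrom
        (Set.range fun x : ℕ+ => {y : ℕ+ | ∃ n : ℕ, f^[n] y = x})) {1}ᶜ ∧
      ¬ @ConnectedSpace ℕ+ (TopologicalSpace.generateFrom
        (Set.range fun x : ℕ+ => {y : ℕ+ | ∃ n : ℕ, f^[n] y = x}))) := by
  have hone : ∀ x : ℕ+, x = 1 ∨ 1 < x := fun x => by
    rcases eq_or_lt_of_le (PNat.one_le x) with h | h
    · exact Or.inl h.symm
    · exact Or.inr h
  -- τ̄_f
  have ho1 : @IsOpen ℕ+ (TopologicalSpace.generateFrom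
      (Set.range fun x : ℕ+ => {y : ℕ+ | ∃ n : ℕ, f^[n] x = y})) {1} := by
    apply TopologicalSpace.isOpen_generateFrom_of_mem
    refine ⟨1, ?_⟩
    ext y
    simp only [Set.mem_setOf_eq, Set.mem_singleton_iff]
    constructor
    · rintro ⟨n, rfl⟩; exact iter_one f h1 n
    · rintro rfl; exact ⟨0, rfl⟩
  have hc1 : @IsOpen ℕ+ (TopologicalSpace.generateFrom
      (Set.range fun x : ℕ+ => {y : ℕ+ | ∃ n : ℕ, f^[n] x = y})) {1}ᶜ := by
    have : ({1}ᶜ : Set ℕ+) = ⋃ x ∈ {x : ℕ+ | 1 < x}, {y : ℕ+ | ∃ n : ℕ, f^[n] x = y} := by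
      ext y
      simp only [Set.mem_compl_iff, Set.mem_singleton_iff, Set.mem_iUnion, Set.mem_setOf_eq]
      constructor
      · intro hy
        rcases hone y with rfl | hy1
        · exact absurd rfl hy
        · exact ⟨y, hy1, 0, rfl⟩
      · rintro ⟨x, hx, n, rfl⟩
        exact ne_of_gt (lt_of_lt_of_le hx (iter_ge f hf x hx n))
    rw [this]
    exact @isOpen_biUnion ℕ+ ℕ+ (TopologicalSpace.generateFrom _) _ _ fun x _ =>
      TopologicalSpace.isOpen_generateFrom_of_mem ⟨x, rfl⟩
  -- τ_f
  have ho2 : @IsOpen ℕ+ (TopologicalSpace.generateFrom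
      (Set.range fun x : ℕ+ => {y : ℕ+ | ∃ n : ℕ, f^[n] y = x})) {1} := by
    apply TopologicalSpace.isOpen_generateFrom_of_mem
    refine ⟨1, ?_⟩
    ext y
    simp only [Set.mem_setOf_eq, Set.mem_singleton_iff]
    constructor
    · rintro ⟨n, hn⟩
      rcases hone y with rfl | hy1
      · rfl
      · exact absurd hn (ne_of_gt (lt_of_lt_of_le hy1 (iter_ge f hf y hy1 n)))
    · rintro rfl; exact ⟨0, rfl⟩
  have hc2 : @IsOpen ℕ+ (TopologicalSpace.generateFrom
      (Set.range fun x : ℕ+ => {y : ℕ+ | ∃ n : ℕ, f^[n] y = x})) {1}ᶜ := by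
    have : ({1}ᶜ : Set ℕ+) = ⋃ x ∈ {x : ℕ+ | 1 < x}, {y : ℕ+ | ∃ n : ℕ, f^[n] y = x} := by
      ext y
      simp only [Set.mem_compl_iff, Set.mem_singleton_iff, Set.mem_iUnion, Set.mem_setOf_eq]
      constructor
      · intro hy
        rcases hone y with rfl | hy1
        · exact absurd rfl hy
        · exact ⟨y, hy1, 0, rfl⟩
      · rintro ⟨x, hx, n, hn⟩
        rintro rfl
        rw [iter_one f h1 n] at hn
        exact absurd hn.symm (ne_of_gt hx)
    rw [this]
    exact @isOpen_biUnion ℕ+ ℕ+ (TopologicalSpace.generateFrom _) _ _ fun x _ =>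
      TopologicalSpace.isOpen_generateFrom_of_mem ⟨x, rfl⟩
  exact ⟨⟨ho1, hc1, @disconn (TopologicalSpace.generateFrom _) ho1 hc1⟩, ⟨ho2, hc2, @disconn (TopologicalSpace.generateFrom _) ho2 hc2⟩⟩
end

section
/- Let φ denote Euler's totient function restricted to the positive integers ℕ⁺ (so φ(1) = 1 and φ(n) < n for all n > 1). Then both the functional Alexandroff topology τ_φ, generated by the sets {y ∈ ℕ⁺ : ∃ n ≥ 0, φ^n(y) = x} for x ∈ ℕ⁺, and the Alexandroff topology τ̄_φ, generated by the sets {φ^n(x) : n ≥ 0} for x ∈ ℕ⁺, make ℕ⁺ a connected topological space. -/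
/-- Euler's totient function viewed as a self-map of the positive integers
(possible since `φ n ≥ 1` for `n ≥ 1`). -/
def totientPNat : ℕ+ → ℕ+ := fun n => ⟨Nat.totient n, Nat.totient_pos.mpr n.pos⟩

lemma totientPNat_one : totientPNat 1 = 1 := by
  apply PNat.coe_injective
  simp [totientPNat]

lemma totientPNat_reaches_one (y : ℕ+) : ∃ n : ℕ, totientPNat^[n] y = 1 := by
  induction y using PNat.strongInductionOn with
  | _ y ih =>
    rcases eq_or_lt_of_le y.one_le with h | h
    · exact ⟨0, h.symm⟩
    · have hlt : totientPNat y < y := by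
        have := Nat.totient_lt y (by exact_mod_cast h)
        exact_mod_cast this
      obtain ⟨n, hn⟩ := ih _ hlt
      exact ⟨n + 1, by rw [Function.iterate_succ_apply, hn]⟩

/-- For Euler's totient function `φ` on `ℕ+` (so `φ 1 = 1` and `φ n < n` for
`n > 1`), both the functional Alexandroff topology `τ_φ`, generated by the sets
`{y : ∃ n, φ^[n] y = x}`, and the Alexandroff topology `τ̄_φ`, generated by the
sets `{φ^[n] x : n ≥ 0}`, make `ℕ+` a connected topological space. -/
theorem stmt_19 :
    (@ConnectedSpace ℕ+ (TopologicalSpace.generateFrom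
      (Set.range fun x : ℕ+ => {y : ℕ+ | ∃ n : ℕ, totientPNat^[n] y = x}))) ∧
    (@ConnectedSpace ℕ+ (TopologicalSpace.generateFrom
      (Set.range fun x : ℕ+ => {y : ℕ+ | ∃ n : ℕ, totientPNat^[n] x = y}))) := by
  constructor
  · -- functional Alexandroff topology: any open set containing 1 is univ
    letI t := TopologicalSpace.generateFrom
      (Set.range fun x : ℕ+ => {y : ℕ+ | ∃ n : ℕ, totientPNat^[n] y = x})
    have key : ∀ U : Set ℕ+, TopologicalSpace.GenerateOpen
        (Set.range fun x : ℕ+ => {y : ℕ+ | ∃ n : ℕ, totientPNat^[n] y = x}) U →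
        (1 : ℕ+) ∈ U → U = Set.univ := by
      intro U hU
      induction hU with
      | basic V hV =>
        intro h1
        obtain ⟨x, rfl⟩ := hV
        obtain ⟨n, hn⟩ := h1
        have hx : x = 1 := by
          rw [← hn]
          clear hn
          induction n with
          | zero => rfl
          | succ n ih => rw [Function.iterate_succ_apply, totientPNat_one]; exact ih
        subst hx
        ext y
        simp only [Set.mem_setOf_eq, Set.mem_univ, iff_true]
        exact totientPNat_reaches_one y
      | univ => intro _; rfl
      | inter U V _ _ ihU ihV =>
        intro h1
        rw [ihU h1.1, ihV h1.2, Set.univ_inter]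
      | sUnion S _ ih =>
        intro h1
        obtain ⟨V, hVS, hV1⟩ := h1
        apply Set.eq_univ_of_univ_subset
        rw [← ih V hVS hV1]
        exact Set.subset_sUnion_of_mem hVS
    refine @ConnectedSpace.mk ℕ+ t ⟨?_⟩ ⟨1⟩
    intro U V hU hV hcov hUne hVne
    have h1 : (1 : ℕ+) ∈ U ∪ V := hcov (Set.mem_univ _)
    rcases h1 with h1 | h1
    · have hUuniv := key U hU h1
      obtain ⟨v, _, hv⟩ := hVne
      exact ⟨v, Set.mem_univ _, by rw [hUuniv]; exact Set.mem_univ _, hv⟩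
    · have hVuniv := key V hV h1
      obtain ⟨u, _, hu⟩ := hUne
      exact ⟨u, Set.mem_univ _, hu, by rw [hVuniv]; exact Set.mem_univ _⟩
  · -- Alexandroff topology: any nonempty open set contains 1
    letI t := TopologicalSpace.generateFrom
      (Set.range fun x : ℕ+ => {y : ℕ+ | ∃ n : ℕ, totientPNat^[n] x = y})
    have key : ∀ U : Set ℕ+, TopologicalSpace.GenerateOpen
        (Set.range fun x : ℕ+ => {y : ℕ+ | ∃ n : ℕ, totientPNat^[n] x = y}) U →
        U.Nonempty → (1 : ℕ+) ∈ U := by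
      intro U hU
      induction hU with
      | basic V hV =>
        intro _
        obtain ⟨x, rfl⟩ := hV
        exact totientPNat_reaches_one x
      | univ => intro _; exact Set.mem_univ _
      | inter U V _ _ ihU ihV =>
        intro ⟨z, hzU, hzV⟩
        exact ⟨ihU ⟨z, hzU⟩, ihV ⟨z, hzV⟩⟩
      | sUnion S _ ih =>
        intro ⟨z, V, hVS, hzV⟩
        exact ⟨V, hVS, ih V hVS ⟨z, hzV⟩⟩
    refine @ConnectedSpace.mk ℕ+ t ⟨?_⟩ ⟨1⟩
    intro U V hU hV _ hUne hVne
    obtain ⟨u, _, hu⟩ := hUne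
    obtain ⟨v, _, hv⟩ := hVne
    exact ⟨1, Set.mem_univ _, key U hU ⟨u, hu⟩, key V hV ⟨v, hv⟩⟩
end
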